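/- Let 0 < p, q ≤ ∞ and suppose either s > 1, or s = 1 and q < ∞. If f : ℝ → ℝ is continuously differentiable and the dyadic Besov quantity ‖f‖_{B^{s,dyad}_{p,q}} := (Σ_{j≥0} [2^{j(s-1/p)} (Σ_{μ∈ℤ} |2^j ∫ f h_{j,μ} dx|^p)^{1/p}]^q)^{1/q} is finite, then f is constant. -/

import Mathlib

/-!
If `f'(x₀) > 0`, continuity of `f'` gives a dyadic interval `I_{J,m}` on which `f' ≥ c > 0`.
By the mean value theorem every coefficient `2^j ⟨f, h_{j,μ}⟩` with `I_{j,μ} ⊆ I_{J,m}` is at most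
`-c 2^{-j}/4`, and there are `2^{j-J}` such `μ`, so the `j`-th term of the `b^s_{p,q}` norm is at
least a constant times `2^{j(s-1)}`. This is bounded below when `s = 1` and unbounded when `s > 1`,
so the norm is infinite; if `f' < 0` somewhere, apply this to `-f`.
-/

open MeasureTheory Real
open scoped ENNReal

/-- The Haar mother function `h = 𝟙_{[0,1/2)} - 𝟙_{[1/2,1)}`. -/
noncomputable def haar (x : ℝ) : ℝ :=
  if 0 ≤ x ∧ x < 1/2 then 1 else if 1/2 ≤ x ∧ x < 1 then -1 else 0

/-- The inner `ℓ^p`-norm (over `ℤ`), with sup-modification for `p = ∞`. -/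
noncomputable def seqNormP (p : ℝ≥0∞) (b : ℤ → ℝ) : ℝ≥0∞ :=
  if p = ∞ then ⨆ μ : ℤ, (‖b μ‖₊ : ℝ≥0∞)
  else (∑' μ : ℤ, (‖b μ‖₊ : ℝ≥0∞) ^ p.toReal) ^ (1 / p.toReal)

/-- The `b^s_{p,q}` quasi-norm, with sup-modifications when `p` or `q` is `∞`. -/
noncomputable def bNorm (s : ℝ) (p q : ℝ≥0∞) (a : ℕ → ℤ → ℝ) : ℝ≥0∞ :=
  if q = ∞ then
    ⨆ j : ℕ, ENNReal.ofReal ((2:ℝ) ^ ((j:ℝ) * (s - 1 / p.toReal))) * seqNormP p (a j)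
  else
    (∑' j : ℕ, (ENNReal.ofReal ((2:ℝ) ^ ((j:ℝ) * (s - 1 / p.toReal))) * seqNormP p (a j))
      ^ q.toReal) ^ (1 / q.toReal)

open Set Filter Topology
open scoped Finset

lemma mul_haar_eq_indicator_sub_indicator (g : ℝ → ℝ) (u : ℝ) :
    g u * haar u = (Ico 0 (1/2)).indicator g u - (Ico (1/2) 1).indicator g u := by
  simp only [haar, indicator_apply, mem_Ico]
  split_ifs <;> grind

lemma integral_indicator_Ico {g : ℝ → ℝ} {a b : ℝ} (hab : a ≤ b) :
    ∫ u, (Ico a b).indicator g u = ∫ u in a..b, g u := by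
  rw [integral_indicator measurableSet_Ico, integral_Ico_eq_integral_Ioo,
    intervalIntegral.integral_of_le hab, integral_Ioc_eq_integral_Ioo]

lemma integral_mul_haar {g : ℝ → ℝ} (hg : Continuous g) :
    ∫ u, g u * haar u = ∫ u in (0 : ℝ)..1/2, (g u - g (u + 1/2)) := by
  have hint : ∀ a b : ℝ, Integrable ((Ico a b).indicator g) := fun a b =>
    (integrable_indicator_iff measurableSet_Ico).2
      (hg.integrableOn_Icc.mono_set Ico_subset_Icc_self)
  simp_rw [mul_haar_eq_indicator_sub_indicator]
  rw [integral_sub (hint _ _) (hint _ _), integral_indicator_Ico (by norm_num),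
    integral_indicator_Ico (by norm_num), intervalIntegral.integral_sub (g := fun u => g (u + 1/2))
      (hg.intervalIntegrable _ _) ((hg.comp (continuous_add_const _)).intervalIntegrable _ _),
    intervalIntegral.integral_comp_add_right]
  norm_num

lemma integral_mul_haar_le {g : ℝ → ℝ} (hg : Continuous g) {δ : ℝ}
    (hδ : ∀ u ∈ Icc (0 : ℝ) (1/2), δ ≤ g (u + 1/2) - g u) :
    ∫ u, g u * haar u ≤ -(δ / 2) := by
  rw [integral_mul_haar hg]
  calc ∫ u in (0 : ℝ)..1/2, (g u - g (u + 1/2))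
      ≤ ∫ u in (0 : ℝ)..1/2, -δ :=
        intervalIntegral.integral_mono_on (by norm_num)
          ((hg.sub (hg.comp (continuous_add_const _))).intervalIntegrable _ _)
          intervalIntegrable_const (fun u hu => by linarith [hδ u hu])
    _ = -(δ / 2) := by simp; ring

noncomputable def haarCoeff (f : ℝ → ℝ) (j : ℕ) (μ : ℤ) : ℝ :=
  2 ^ j * ∫ x, f x * haar (2 ^ j * x - μ)

lemma haarCoeff_eq_integral (f : ℝ → ℝ) (j : ℕ) (μ : ℤ) :
    haarCoeff f j μ = ∫ u, f ((u + μ) / 2 ^ j) * haar u := by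
  have h2j : (0 : ℝ) < 2 ^ j := by positivity
  have hsub := integral_sub_right_eq_self (μ := volume)
    (fun y => f ((y + μ) / 2 ^ j) * haar y) (μ : ℝ)
  have hscale := Measure.integral_comp_mul_left
    (fun y => f ((y - μ + μ) / 2 ^ j) * haar (y - μ)) (2 ^ j)
  simp only [sub_add_cancel, mul_div_cancel_left₀ _ h2j.ne'] at hscale hsub
  rw [haarCoeff, hscale, hsub, abs_of_pos (inv_pos.2 h2j), smul_eq_mul,
    mul_inv_cancel_left₀ h2j.ne']

lemma haarCoeff_neg (f : ℝ → ℝ) : haarCoeff (-f) = -haarCoeff f := by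
  ext j μ
  simp [haarCoeff, neg_mul, integral_neg]

def dyadicIcc (j : ℕ) (μ : ℤ) : Set ℝ := Icc (μ / 2 ^ j) ((μ + 1) / 2 ^ j)

lemma haarCoeff_le {f : ℝ → ℝ} (hf : Differentiable ℝ f) {c : ℝ} {j : ℕ} {μ : ℤ}
    (hder : ∀ t ∈ dyadicIcc j μ, c ≤ deriv f t) :
    haarCoeff f j μ ≤ -(c / (4 * 2 ^ j)) := by
  have hmvt := (convex_Icc _ _).mul_sub_le_image_sub_of_le_deriv hf.continuous.continuousOn
    hf.differentiableOn (fun t ht => hder t (interior_subset ht))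
  have hstep : ∀ u ∈ Icc (0 : ℝ) (1/2),
      c / (2 * 2 ^ j) ≤ f ((u + 1/2 + μ) / 2 ^ j) - f ((u + μ) / 2 ^ j) := by
    rintro u ⟨hu₀, hu₁⟩
    have hmem : ∀ v ∈ Icc (0 : ℝ) 1, (v + μ) / 2 ^ j ∈ Icc ((μ : ℝ) / 2 ^ j) ((μ + 1) / 2 ^ j) :=
      fun v hv => ⟨div_le_div_of_nonneg_right (by linarith [hv.1]) (by positivity),
        div_le_div_of_nonneg_right (by linarith [hv.2]) (by positivity)⟩
    have := hmvt _ (hmem u ⟨hu₀, by linarith⟩) _ (hmem (u + 1/2) ⟨by linarith, by linarith⟩)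
      (by gcongr; linarith)
    convert this using 1
    field_simp
    ring
  rw [haarCoeff_eq_integral]
  calc _ ≤ -(c / (2 * 2 ^ j) / 2) := integral_mul_haar_le (g := fun u => f ((u + μ) / 2 ^ j))
        (hf.continuous.comp (by fun_prop)) hstep
    _ = _ := by ring

lemma dyadicIcc_subset {J j : ℕ} (hJ : J ≤ j) {m μ : ℤ}
    (hμ : μ ∈ Finset.Ico (m * 2 ^ (j - J)) ((m + 1) * 2 ^ (j - J))) :
    dyadicIcc j μ ⊆ dyadicIcc J m := by
  obtain ⟨hμ₁, hμ₂⟩ := Finset.mem_Ico.1 hμ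
  have h₁ : (m : ℝ) * 2 ^ (j - J) ≤ μ := by exact_mod_cast hμ₁
  have h₂ : (μ : ℝ) + 1 ≤ (m + 1) * 2 ^ (j - J) := by exact_mod_cast hμ₂
  have hpow : (2 : ℝ) ^ j = 2 ^ (j - J) * 2 ^ J := by rw [← pow_add, Nat.sub_add_cancel hJ]
  have h2J : (0 : ℝ) < 2 ^ J := by positivity
  apply Set.Icc_subset_Icc
  · rw [div_le_div_iff₀ h2J (by positivity), hpow]; nlinarith
  · rw [div_le_div_iff₀ (by positivity) h2J, hpow]; nlinarith

lemma exists_dyadicIcc_subset {U : Set ℝ} {x : ℝ} (hU : U ∈ 𝓝 x) :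
    ∃ J : ℕ, ∃ m : ℤ, dyadicIcc J m ⊆ U := by
  obtain ⟨δ, hδ, hball⟩ := Metric.mem_nhds_iff.1 hU
  obtain ⟨J, hJ⟩ := exists_pow_lt_of_lt_one hδ one_half_lt_one
  have hT : (0 : ℝ) < 2 ^ J := by positivity
  have hδT : 1 < δ * 2 ^ J := by
    rwa [div_pow, one_pow, div_lt_iff₀ hT] at hJ
  refine ⟨J, ⌊2 ^ J * x⌋, fun t ⟨ht₁, ht₂⟩ => hball ?_⟩
  have hm₁ := Int.floor_le ((2 : ℝ) ^ J * x)
  have hm₂ := Int.lt_floor_add_one ((2 : ℝ) ^ J * x)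
  rw [div_le_iff₀ hT] at ht₁
  rw [le_div_iff₀ hT] at ht₂
  rw [Metric.mem_ball, Real.dist_eq, abs_sub_lt_iff]
  constructor <;> nlinarith

lemma seqNormP_neg (p : ℝ≥0∞) (b : ℤ → ℝ) : seqNormP p (-b) = seqNormP p b := by
  simp [seqNormP]

lemma bNorm_neg (s : ℝ) (p q : ℝ≥0∞) (a : ℕ → ℤ → ℝ) : bNorm s p q (-a) = bNorm s p q a := by
  simp only [bNorm, Pi.neg_apply, seqNormP_neg]

-- For `p = ∞` the exponent `1 / p.toReal` is `1 / 0 = 0`, so the bound reads `ε ≤ ⨆ μ, ‖b μ‖ₑ`.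
lemma card_rpow_mul_le_seqNormP {p : ℝ≥0∞} (hp : 0 < p) {b : ℤ → ℝ} {S : Finset ℤ}
    (hS : S.Nonempty) {ε : ℝ≥0∞} (hb : ∀ μ ∈ S, ε ≤ ‖b μ‖ₑ) :
    (#S : ℝ≥0∞) ^ (1 / p.toReal) * ε ≤ seqNormP p b := by
  rw [seqNormP]
  split_ifs with hp_top
  · obtain ⟨μ, hμ⟩ := hS
    simp only [hp_top, ENNReal.toReal_top, div_zero, ENNReal.rpow_zero, one_mul]
    exact (hb μ hμ).trans (le_iSup (fun μ => (‖b μ‖₊ : ℝ≥0∞)) μ)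
  · have hpr : 0 < p.toReal := ENNReal.toReal_pos hp.ne' hp_top
    calc (#S : ℝ≥0∞) ^ (1 / p.toReal) * ε = (#S * ε ^ p.toReal) ^ (1 / p.toReal) := by
          rw [ENNReal.mul_rpow_of_nonneg _ _ (by positivity), ← ENNReal.rpow_mul,
            mul_one_div_cancel hpr.ne', ENNReal.rpow_one]
      _ ≤ (∑' μ : ℤ, (‖b μ‖₊ : ℝ≥0∞) ^ p.toReal) ^ (1 / p.toReal) := by
          gcongr
          calc #S * ε ^ p.toReal = ∑ μ ∈ S, ε ^ p.toReal := by simp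
            _ ≤ ∑ μ ∈ S, ‖b μ‖ₑ ^ p.toReal := Finset.sum_le_sum fun μ hμ => by gcongr; exact hb μ hμ
            _ ≤ _ := ENNReal.sum_le_tsum S

lemma ofReal_le_seqNormP_haarCoeff {p : ℝ≥0∞} (hp : 0 < p) {f : ℝ → ℝ}
    (hf : Differentiable ℝ f) {c : ℝ} {J j : ℕ} {m : ℤ} (hJ : J ≤ j)
    (hder : ∀ t ∈ dyadicIcc J m, c ≤ deriv f t) :
    ENNReal.ofReal ((2 ^ (j - J) : ℝ) ^ (1 / p.toReal) * (c / (4 * 2 ^ j)))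
      ≤ seqNormP p (haarCoeff f j) := by
  set S := Finset.Ico (m * 2 ^ (j - J)) ((m + 1) * 2 ^ (j - J))
  have hcard : #S = 2 ^ (j - J) := by
    have : (m + 1) * 2 ^ (j - J) - m * 2 ^ (j - J) = ((2 ^ (j - J) : ℕ) : ℤ) := by push_cast; ring
    rw [Int.card_Ico, this, Int.toNat_natCast]
  have hS : S.Nonempty := Finset.card_pos.1 (hcard ▸ by positivity)
  have hcoeff : ∀ μ ∈ S, ENNReal.ofReal (c / (4 * 2 ^ j)) ≤ ‖haarCoeff f j μ‖ₑ := by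
    intro μ hμ
    rw [Real.enorm_eq_ofReal_abs]
    have := haarCoeff_le hf (fun t ht => hder t (dyadicIcc_subset hJ hμ ht))
    exact ENNReal.ofReal_le_ofReal ((le_neg_of_le_neg this).trans (neg_le_abs _))
  have hcardℝ : (2 : ℝ) ^ (j - J) = #S := by rw [hcard]; push_cast; rfl
  rw [ENNReal.ofReal_mul (by positivity), hcardℝ,
    ← ENNReal.ofReal_rpow_of_nonneg (by positivity) (by positivity), ENNReal.ofReal_natCast]
  exact card_rpow_mul_le_seqNormP hp hS hcoeff

lemma bNorm_eq_top_of_le {s : ℝ} {p q : ℝ≥0∞} (hq : 0 < q) (hs : 1 < s ∨ (s = 1 ∧ q ≠ ∞))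
    {a : ℕ → ℤ → ℝ} {K : ℝ} (hK : 0 < K)
    (hle : ∀ᶠ j : ℕ in atTop, ENNReal.ofReal (K * 2 ^ ((j : ℝ) * (s - 1))) ≤
      ENNReal.ofReal (2 ^ ((j : ℝ) * (s - 1 / p.toReal))) * seqNormP p (a j)) :
    bNorm s p q a = ∞ := by
  rw [bNorm]
  split_ifs with hq_top
  · have hs₁ : 1 < s := hs.resolve_right fun h => h.2 hq_top
    have hlim :
        Tendsto (fun j : ℕ => ENNReal.ofReal (K * 2 ^ ((j : ℝ) * (s - 1)))) atTop (𝓝 ∞) := by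
      refine ENNReal.tendsto_ofReal_atTop.comp (Tendsto.const_mul_atTop hK ?_)
      simp_rw [mul_comm (_ : ℝ) (s - 1), Real.rpow_mul two_pos.le, Real.rpow_natCast]
      exact tendsto_pow_atTop_atTop_of_one_lt (one_lt_rpow one_lt_two (by linarith))
    exact top_le_iff.1 (le_of_tendsto hlim (hle.mono fun j hj => hj.trans (le_iSup_of_le j le_rfl)))
  · have hs₁ : 1 ≤ s := by rcases hs with h | ⟨h, -⟩ <;> linarith
    have hqr : 0 < q.toReal := ENNReal.toReal_pos hq.ne' hq_top
    suffices htop : ∑' j : ℕ, (ENNReal.ofReal (2 ^ ((j : ℝ) * (s - 1 / p.toReal))) *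
        seqNormP p (a j)) ^ q.toReal = ∞ by
      rw [htop]; exact ENNReal.top_rpow_of_pos (by positivity)
    by_contra hfin
    have hKq : 0 < ENNReal.ofReal K ^ q.toReal := ENNReal.rpow_pos (by simpa) ENNReal.ofReal_ne_top
    have hsmall := (ENNReal.tendsto_atTop_zero_of_tsum_ne_top hfin).eventually (gt_mem_nhds hKq)
    obtain ⟨j, hj_small, hj_le⟩ := (hsmall.and hle).exists
    refine hj_small.not_ge (ENNReal.rpow_le_rpow (le_trans ?_ hj_le) hqr.le)
    exact ENNReal.ofReal_le_ofReal (le_mul_of_one_le_right hK.le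
      (one_le_rpow one_le_two (mul_nonneg j.cast_nonneg (by linarith))))

lemma bNorm_haarCoeff_eq_top {p q : ℝ≥0∞} (hp : 0 < p) (hq : 0 < q) {s : ℝ}
    (hs : 1 < s ∨ (s = 1 ∧ q ≠ ∞)) {f : ℝ → ℝ} (hf : ContDiff ℝ 1 f) {x₀ : ℝ}
    (hx₀ : 0 < deriv f x₀) :
    bNorm s p q (haarCoeff f) = ∞ := by
  set c := deriv f x₀ / 2
  set r := 1 / p.toReal
  obtain ⟨J, m, hJm⟩ := exists_dyadicIcc_subset
    ((hf.continuous_deriv le_rfl).continuousAt.eventually (lt_mem_nhds (half_lt_self hx₀)))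
  refine bNorm_eq_top_of_le hq hs (K := c / 4 * 2 ^ (-(J : ℝ) * r)) (by positivity) ?_
  filter_upwards [eventually_ge_atTop J] with j hj
  have h2 : (0 : ℝ) < 2 := two_pos
  have hscale : c / 4 * 2 ^ (-(J : ℝ) * r) * 2 ^ ((j : ℝ) * (s - 1))
      = 2 ^ ((j : ℝ) * (s - r)) * ((2 ^ (j - J) : ℝ) ^ r * (c / (4 * 2 ^ j))) := by
    rw [← rpow_natCast 2 (j - J), Nat.cast_sub hj, ← rpow_mul h2.le, ← rpow_natCast 2 j,
      show c / (4 * (2 : ℝ) ^ (j : ℝ)) = c / 4 * 2 ^ (-(j : ℝ)) by rw [rpow_neg h2.le]; field_simp]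
    calc _ = c / 4 * (2 ^ (-(J : ℝ) * r) * 2 ^ ((j : ℝ) * (s - 1))) := by ring
      _ = c / 4 * (2 ^ ((j : ℝ) * (s - r)) * 2 ^ (((j : ℝ) - J) * r) * 2 ^ (-(j : ℝ))) := by
        rw [← rpow_add h2, ← rpow_add h2, ← rpow_add h2]; ring_nf
      _ = _ := by ring
  rw [hscale, ENNReal.ofReal_mul (by positivity)]
  gcongr
  exact ofReal_le_seqNormP_haarCoeff hp (hf.differentiable one_ne_zero) hj fun t ht => (hJm ht).le

/-- If `s > 1`, or `s = 1` and `q < ∞`, then a `C¹` function with finite dyadic Besov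
quantity `‖f‖_{B^{s,dyad}_{p,q}}` is constant. -/
theorem constant_of_dyadic_besov (p q : ℝ≥0∞) (hp : 0 < p) (hq : 0 < q) (s : ℝ)
    (hs : 1 < s ∨ (s = 1 ∧ q ≠ ∞)) (f : ℝ → ℝ) (hf : ContDiff ℝ 1 f)
    (hfin : bNorm s p q (fun j μ => 2 ^ j * ∫ x : ℝ, f x * haar (2 ^ j * x - (μ : ℝ))) ≠ ∞) :
    ∀ x y : ℝ, f x = f y := by
  suffices hderiv : ∀ x₀, deriv f x₀ = 0 from
    is_const_of_deriv_eq_zero (hf.differentiable one_ne_zero) hderiv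
  intro x₀
  by_contra hx₀
  rcases lt_or_gt_of_ne hx₀ with hneg | hpos
  · have htop := bNorm_haarCoeff_eq_top hp hq hs hf.neg (x₀ := x₀) (by simpa using hneg)
    rw [← Pi.neg_def, haarCoeff_neg, bNorm_neg] at htop
    exact hfin htop
  · exact hfin (bNorm_haarCoeff_eq_top hp hq hs hf hpos)
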